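/- Completeness of enumeration of models: let P be a normal logic program and I_1, …, I_k ∈ SM(P) (each finite). If SM(P ∪ {Constraint(I_1), …, Constraint(I_k)}) = ∅, then SM(P) = {I_1, …, I_k}, i.e., the enumerated models are all the stable models of P. -/

import Mathlib

/-- A rule of a normal logic program: head atom, positive body, negative body. -/
structure Rule (A : Type) where
  head : A
  pos : Finset A
  neg : Finset A

/-- An interpretation `I` is a model of a rule `r`: the head is true whenever the
positive body is contained in `I` and the negative body is disjoint from `I`. -/
def modelsRule {A : Type} (I : Set A) (r : Rule A) : Prop :=
  ((↑r.pos : Set A) ⊆ I ∧ ∀ a ∈ r.neg, a ∉ I) → r.head ∈ I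

/-- `I` is a model of the program `P`. -/
def modelsProg {A : Type} (I : Set A) (P : Set (Rule A)) : Prop :=
  ∀ r ∈ P, modelsRule I r

/-- The Gelfond–Lifschitz reduct `P^I`: delete rules whose negative body meets `I`,
and drop the negative body of the remaining rules. -/
def reduct {A : Type} (P : Set (Rule A)) (I : Set A) : Set (Rule A) :=
  {r' | ∃ r ∈ P, (∀ a ∈ r.neg, a ∉ I) ∧ r' = Rule.mk r.head r.pos ∅}

/-- `M` is a stable model of `P` (with falsum atom `bot`): `M` is an interpretation
(`bot ∉ M`), `M` models the reduct `P^M`, and no proper subset of `M` does. -/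
def SM {A : Type} (bot : A) (P : Set (Rule A)) : Set (Set A) :=
  {M | bot ∉ M ∧ modelsProg M (reduct P M) ∧ ∀ J, J ⊂ M → ¬ modelsProg J (reduct P M)}

/-- Cautious consequences: atoms belonging to every stable model of `P`. -/
def CC {A : Type} (bot : A) (P : Set (Rule A)) : Set A :=
  {a | ∀ M ∈ SM bot P, a ∈ M}

/-! A stable model `M` of `P` outside the list satisfies every added constraint: `I_j ⊆ M` would
force `I_j = M`, as stable models are `⊆`-incomparable. Since adding rules only enlarges the
reduct, minimality of `M` survives, so `M` would be a stable model of the extended program. -/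

theorem reduct_antitone {A : Type} (P : Set (Rule A)) {I J : Set A} (hIJ : I ⊆ J) :
    reduct P J ⊆ reduct P I := by
  rintro _ ⟨r, hr, hneg, rfl⟩
  exact ⟨r, hr, fun a ha haI => hneg a ha (hIJ haI), rfl⟩

theorem reduct_mono {A : Type} {P Q : Set (Rule A)} (hPQ : P ⊆ Q) (I : Set A) :
    reduct P I ⊆ reduct Q I := by
  rintro _ ⟨r, hr, hneg, rfl⟩
  exact ⟨r, hPQ hr, hneg, rfl⟩

theorem reduct_union {A : Type} (P Q : Set (Rule A)) (I : Set A) :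
    reduct (P ∪ Q) I = reduct P I ∪ reduct Q I := by
  ext r'
  simp only [reduct, Set.mem_ofPred_eq, Set.mem_union, or_and_right, exists_or]

theorem modelsProg.mono {A : Type} {I : Set A} {P Q : Set (Rule A)} (hI : modelsProg I Q)
    (hPQ : P ⊆ Q) : modelsProg I P :=
  fun r hr => hI r (hPQ hr)

theorem modelsProg_union {A : Type} {I : Set A} {P Q : Set (Rule A)} :
    modelsProg I (P ∪ Q) ↔ modelsProg I P ∧ modelsProg I Q := by
  simp only [modelsProg, Set.mem_union, or_imp, forall_and]

theorem modelsRule_of_not_pos_subset {A : Type} {I : Set A} {r : Rule A}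
    (hr : ¬ (↑r.pos : Set A) ⊆ I) : modelsRule I r :=
  fun hbody => absurd hbody.1 hr

/-- A smaller stable model `N` also models the larger reduct `P^M`, the reduct being antitone. -/
theorem eq_of_mem_SM_of_subset {A : Type} {bot : A} {P : Set (Rule A)} {M N : Set A}
    (hN : N ∈ SM bot P) (hM : M ∈ SM bot P) (hNM : N ⊆ M) : N = M := by
  by_contra hne
  exact hM.2.2 N (hNM.ssubset_of_ne hne) (hN.2.1.mono (reduct_antitone P hNM))

theorem mem_SM_union {A : Type} {bot : A} {P Q : Set (Rule A)} {M : Set A}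
    (hM : M ∈ SM bot P) (hQ : modelsProg M (reduct Q M)) : M ∈ SM bot (P ∪ Q) := by
  obtain ⟨hbot, hmodel, hmin⟩ := hM
  refine ⟨hbot, ?_, fun J hJM hJ => hmin J hJM (hJ.mono ?_)⟩
  · rw [reduct_union]
    exact modelsProg_union.2 ⟨hmodel, hQ⟩
  · exact reduct_mono Set.subset_union_left M

theorem enumeration_of_models_complete_general {A : Type} (bot : A)
    (P : Set (Rule A))
    (k : ℕ) (Is : Fin k → Finset A) (hIs : ∀ j, (↑(Is j) : Set A) ∈ SM bot P)
    (h : SM bot (P ∪ Set.range fun j => Rule.mk bot (Is j) ∅) = ∅) :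
    SM bot P = Set.range fun j => (↑(Is j) : Set A) := by
  ext M
  refine ⟨fun hM => ?_, fun ⟨j, hj⟩ => hj ▸ hIs j⟩
  by_contra hnew
  have hconstraints : modelsProg M (reduct (Set.range fun j => Rule.mk bot (Is j) ∅) M) := by
    rintro _ ⟨_, ⟨j, rfl⟩, -, rfl⟩
    exact modelsRule_of_not_pos_subset fun hsub => hnew ⟨j, eq_of_mem_SM_of_subset (hIs j) hM hsub⟩
  simpa [h] using mem_SM_union hM hconstraints

/-- Completeness of enumeration of models: if no further stable model exists after
eliminating `I_1, …, I_k`, then these are all the stable models of `P`. -/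
theorem enumeration_of_models_complete {A : Type} [Countable A] (bot : A)
    (P : Set (Rule A)) (hP : P.Finite)
    (k : ℕ) (Is : Fin k → Finset A) (hIs : ∀ j, (↑(Is j) : Set A) ∈ SM bot P)
    (h : SM bot (P ∪ Set.range fun j => Rule.mk bot (Is j) ∅) = ∅) :
    SM bot P = Set.range fun j => (↑(Is j) : Set A) :=
  enumeration_of_models_complete_general bot P k Is hIs h
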